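/- Let D = diag(d₁,d₂,d₃) with dᵢ > 0. Then min over Q ∈ SO(3) and all real matrix logarithms X with exp X = Qᵀ D of ‖dev₃(sym X)‖_F² equals ‖dev₃(log D)‖_F², where dev₃ Y = Y − (tr Y / 3)·I. -/

import Mathlib

/-!
Let `S = sym X` have eigenvalues `λ`. Since `⟪X u, u⟫ = ⟪S u, u⟫` lies between `(min λ) ‖u‖²` and
`(max λ) ‖u‖²`, a Grönwall argument for `t ↦ ‖exp (t X) v‖²` gives
`e^{min λ} ‖v‖ ≤ ‖exp X v‖ ≤ e^{max λ} ‖v‖`. The columns of `exp X = Qᵀ D` have lengths `dᵢ`, so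
every `log dᵢ` lies in `[min λ, max λ]`, and `det (exp X) = e^{tr X}` gives
`∑ log dᵢ = tr X = ∑ λᵢ`. For three numbers these constraints force `∑ (log dᵢ)² ≤ ∑ λᵢ²`, which
is the claim because `‖dev₃ Y‖² = ‖Y‖² - (tr Y)² / 3`. Equality holds at `Q = 1`, `X = log D`.
-/

open Matrix

/-- Squared Frobenius norm of a real matrix. -/
noncomputable def frobSqR (X : Matrix (Fin 3) (Fin 3) ℝ) : ℝ :=
  ∑ i, ∑ j, |X i j| ^ 2

/-- Deviatoric (trace-free) part: `dev₃ Y = Y − (tr Y / 3) • I`. -/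
noncomputable def dev3 (Y : Matrix (Fin 3) (Fin 3) ℝ) : Matrix (Fin 3) (Fin 3) ℝ :=
  Y - (Matrix.trace Y / 3) • (1 : Matrix (Fin 3) (Fin 3) ℝ)

open NormedSpace Finset

theorem sum_sq_le_sum_sq_of_monotone {x a : Fin 3 → ℝ} (hx : Monotone x) (ha : Monotone a)
    (h0 : x 0 ≤ a 0) (h2 : a 2 ≤ x 2) (hsum : ∑ i, a i = ∑ i, x i) :
    ∑ i, a i ^ 2 ≤ ∑ i, x i ^ 2 := by
  have hx01 := hx (show (0 : Fin 3) ≤ 1 by decide)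
  have hx12 := hx (show (1 : Fin 3) ≤ 2 by decide)
  have ha01 := ha (show (0 : Fin 3) ≤ 1 by decide)
  have ha12 := ha (show (1 : Fin 3) ≤ 2 by decide)
  simp only [Fin.sum_univ_three] at hsum ⊢
  -- When the sums agree,
  -- `∑ x² - ∑ a² = (x₂ - a₂)(x₂ + a₂ - x₁ - a₁) + (a₀ - x₀)(x₁ + a₁ - x₀ - a₀)`.
  nlinarith [mul_nonneg (sub_nonneg.2 h2) (by linarith : 0 ≤ x 2 + a 2 - x 1 - a 1),
    mul_nonneg (sub_nonneg.2 h0) (by linarith : 0 ≤ x 1 + a 1 - x 0 - a 0),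
    mul_eq_zero_of_right (x 1 + a 1) (sub_eq_zero.2 hsum)]

theorem sum_sq_le_sum_sq_of_mem_Icc {x a : Fin 3 → ℝ}
    (ha : ∀ i, a i ∈ Set.Icc (univ.inf' univ_nonempty x) (univ.sup' univ_nonempty x))
    (hsum : ∑ i, a i = ∑ i, x i) :
    ∑ i, a i ^ 2 ≤ ∑ i, x i ^ 2 := by
  obtain ⟨σ, hσ⟩ : ∃ σ : Equiv.Perm (Fin 3), Monotone (x ∘ σ) := ⟨_, Tuple.monotone_sort x⟩
  obtain ⟨τ, hτ⟩ : ∃ τ : Equiv.Perm (Fin 3), Monotone (a ∘ τ) := ⟨_, Tuple.monotone_sort a⟩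
  have hmax : univ.sup' univ_nonempty x ≤ x (σ 2) :=
    sup'_le _ _ fun j _ => by simpa using hσ (Fin.le_last (σ.symm j))
  have hmin : x (σ 0) ≤ univ.inf' univ_nonempty x :=
    le_inf' _ _ fun j _ => by simpa using hσ (Fin.zero_le (σ.symm j))
  have key := sum_sq_le_sum_sq_of_monotone hσ hτ
    (hmin.trans (ha (τ 0)).1) ((ha (τ 2)).2.trans hmax)
    (by simpa only [Function.comp_apply, Equiv.sum_comp] using hsum)
  simpa only [Function.comp_apply, Equiv.sum_comp σ (fun i => x i ^ 2),
    Equiv.sum_comp τ (fun i => a i ^ 2)] using key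

section Spectral

variable {n : Type*} [Fintype n]

theorem mulVec_dotProduct_eq_dotProduct_transpose_mulVec (A : Matrix n n ℝ) (x y : n → ℝ) :
    (A *ᵥ x) ⬝ᵥ y = x ⬝ᵥ (Aᵀ *ᵥ y) := by
  rw [dotProduct_comm, dotProduct_mulVec, mulVec_transpose, dotProduct_comm]

variable [DecidableEq n]

theorem transpose_mulVec_dotProduct_self {Q : Matrix n n ℝ} (hQ : Q * Qᵀ = 1) (v : n → ℝ) :
    (Qᵀ *ᵥ v) ⬝ᵥ (Qᵀ *ᵥ v) = v ⬝ᵥ v := by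
  rw [mulVec_dotProduct_eq_dotProduct_transpose_mulVec, transpose_transpose, mulVec_mulVec, hQ,
    one_mulVec]

namespace Matrix.IsHermitian

variable {S : Matrix n n ℝ} (hS : S.IsHermitian)

theorem exists_orthogonal_diagonalization :
    ∃ U : Matrix n n ℝ, U * Uᵀ = 1 ∧ S = U * diagonal hS.eigenvalues * Uᵀ := by
  refine ⟨hS.eigenvectorUnitary, ?_, ?_⟩
  · simpa [star_eq_conjTranspose] using Unitary.coe_mul_star_self hS.eigenvectorUnitary
  · conv_lhs => rw [hS.spectral_theorem]
    simp [Unitary.conjStarAlgAut_apply, RCLike.ofReal_real_eq_id, star_eq_conjTranspose]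

theorem exists_mulVec_dotProduct_eq (u : n → ℝ) :
    ∃ w : n → ℝ, (S *ᵥ u) ⬝ᵥ u = ∑ i, hS.eigenvalues i * w i ^ 2 ∧ u ⬝ᵥ u = ∑ i, w i ^ 2 := by
  obtain ⟨U, hU, hSU⟩ := hS.exists_orthogonal_diagonalization
  generalize hS.eigenvalues = μ at hSU ⊢
  subst hSU
  refine ⟨Uᵀ *ᵥ u, ?_, ?_⟩
  · rw [← mulVec_mulVec, ← mulVec_mulVec, mulVec_dotProduct_eq_dotProduct_transpose_mulVec]
    simp only [dotProduct, mulVec_diagonal, sq, mul_assoc]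
  · rw [← transpose_mulVec_dotProduct_self hU u]
    simp only [dotProduct, sq]

theorem mulVec_dotProduct_le {c : ℝ} (hc : ∀ i, hS.eigenvalues i ≤ c) (u : n → ℝ) :
    (S *ᵥ u) ⬝ᵥ u ≤ c * (u ⬝ᵥ u) := by
  obtain ⟨w, hSu, hu⟩ := hS.exists_mulVec_dotProduct_eq u
  rw [hSu, hu, mul_sum]
  exact sum_le_sum fun i _ => mul_le_mul_of_nonneg_right (hc i) (sq_nonneg _)

theorem le_mulVec_dotProduct {c : ℝ} (hc : ∀ i, c ≤ hS.eigenvalues i) (u : n → ℝ) :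
    c * (u ⬝ᵥ u) ≤ (S *ᵥ u) ⬝ᵥ u := by
  obtain ⟨w, hSu, hu⟩ := hS.exists_mulVec_dotProduct_eq u
  rw [hSu, hu, mul_sum]
  exact sum_le_sum fun i _ => mul_le_mul_of_nonneg_right (hc i) (sq_nonneg _)

theorem sum_sq_apply_eq_sum_sq_eigenvalues :
    ∑ i, ∑ j, S i j ^ 2 = ∑ i, hS.eigenvalues i ^ 2 := by
  obtain ⟨U, hU, hSU⟩ := hS.exists_orthogonal_diagonalization
  have hUU : Uᵀ * U = 1 := mul_eq_one_comm.mp hU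
  have hsymm : ∀ i j, S j i = S i j := fun i j => by simpa using hS.apply i j
  have htrace : ∑ i, ∑ j, S i j ^ 2 = trace (S * S) := by
    simp only [trace, diag, mul_apply, sq, hsymm]
  rw [htrace]
  generalize hS.eigenvalues = μ at hSU ⊢
  subst hSU
  calc trace ((U * diagonal μ * Uᵀ) * (U * diagonal μ * Uᵀ))
        = trace (U * (diagonal μ * diagonal μ) * Uᵀ) := by
        simp only [Matrix.mul_assoc, ← Matrix.mul_assoc Uᵀ U, hUU, Matrix.one_mul]
    _ = ∑ i, μ i ^ 2 := by
        rw [trace_mul_cycle, hUU, Matrix.one_mul, diagonal_mul_diagonal, trace_diagonal]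
        simp only [sq]

end Matrix.IsHermitian

end Spectral

section Exponential

attribute [local instance] Matrix.linftyOpSemiNormedRing Matrix.linftyOpNormedRing
  Matrix.linftyOpNormedAlgebra

variable {n : Type*} [Fintype n] [DecidableEq n]

theorem hasDerivAt_exp_smul_mulVec (A : Matrix n n ℝ) (v : n → ℝ) (t : ℝ) :
    HasDerivAt (fun s : ℝ => exp (s • A) *ᵥ v) ((A * exp (t • A)) *ᵥ v) t :=
  (((mulVecBilin ℝ ℝ).flip v).toContinuousLinearMap.hasFDerivAt.comp_hasDerivAt t
    (hasDerivAt_exp_smul_const' A t) :)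

theorem exp_mulVec_dotProduct_self_le {A : Matrix n n ℝ} {c : ℝ}
    (hA : ∀ u, (A *ᵥ u) ⬝ᵥ u ≤ c * (u ⬝ᵥ u)) (v : n → ℝ) :
    (exp A *ᵥ v) ⬝ᵥ (exp A *ᵥ v) ≤ Real.exp (2 * c) * (v ⬝ᵥ v) := by
  set γ : ℝ → n → ℝ := fun t => exp (t • A) *ᵥ v
  have hγ : ∀ t, HasDerivAt (fun t => γ t ⬝ᵥ γ t) (2 * ((A *ᵥ γ t) ⬝ᵥ γ t)) t := by
    intro t
    have hcomp := hasDerivAt_pi.1 (hasDerivAt_exp_smul_mulVec A v t)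
    refine (HasDerivAt.fun_sum fun i (_ : i ∈ univ) => (hcomp i).fun_mul (hcomp i)).congr_deriv ?_
    simp only [← mulVec_mulVec, dotProduct, mul_sum, γ]
    exact sum_congr rfl fun i _ => by ring
  -- `e^{-2ct} ‖γ t‖²` is antitone since `d/dt ‖γ t‖² = 2 ⟪A γ t, γ t⟫ ≤ 2c ‖γ t‖²`.
  set h : ℝ → ℝ := fun t => Real.exp (t * -(2 * c)) * (γ t ⬝ᵥ γ t)
  have hh : ∀ t, HasDerivAt h (Real.exp (t * -(2 * c)) *
      (2 * ((A *ᵥ γ t) ⬝ᵥ γ t) - 2 * c * (γ t ⬝ᵥ γ t))) t :=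
    fun t => (((hasDerivAt_mul_const _).exp).fun_mul (hγ t)).congr_deriv (by ring)
  have hanti : Antitone h := antitone_of_deriv_nonpos (fun t => (hh t).differentiableAt)
    fun t => (hh t).deriv.le.trans <| mul_nonpos_of_nonneg_of_nonpos (Real.exp_pos _).le
      (by linarith [hA (γ t)])
  have h10 : h 1 ≤ h 0 := hanti zero_le_one
  simp only [h, γ, one_smul, zero_smul, exp_zero, one_mulVec, zero_mul, one_mul,
    Real.exp_zero] at h10
  calc (exp A *ᵥ v) ⬝ᵥ (exp A *ᵥ v)
      = Real.exp (2 * c) * (Real.exp (-(2 * c)) * ((exp A *ᵥ v) ⬝ᵥ (exp A *ᵥ v))) := by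
        rw [← mul_assoc, ← Real.exp_add, add_neg_cancel, Real.exp_zero, one_mul]
    _ ≤ Real.exp (2 * c) * (v ⬝ᵥ v) := mul_le_mul_of_nonneg_left h10 (Real.exp_pos _).le

theorem hasDerivAt_exp_smul_apply (A : Matrix n n ℝ) (t : ℝ) (i j : n) :
    HasDerivAt (fun s : ℝ => exp (s • A) i j) ((A * exp (t • A)) i j) t := by
  simpa [mulVec_single_one] using
    hasDerivAt_pi.1 (hasDerivAt_exp_smul_mulVec A (Pi.single j 1) t) i

theorem exp_neg_mul_exp (A : Matrix n n ℝ) : exp (-A) * exp A = 1 := by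
  rw [← Matrix.exp_add_of_commute _ _ (Commute.neg_left (Commute.refl A)), neg_add_cancel,
    exp_zero]

theorem hasDerivAt_det_exp_smul (A : Matrix (Fin 3) (Fin 3) ℝ) (t : ℝ) :
    HasDerivAt (fun s : ℝ => (exp (s • A)).det) (trace A * (exp (t • A)).det) t := by
  have H := hasDerivAt_exp_smul_apply A t
  simp only [det_fin_three]
  refine ((((((H 0 0).fun_mul (H 1 1)).fun_mul (H 2 2)).fun_sub
    (((H 0 0).fun_mul (H 1 2)).fun_mul (H 2 1))).fun_sub
    (((H 0 1).fun_mul (H 1 0)).fun_mul (H 2 2))).fun_add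
    (((H 0 1).fun_mul (H 1 2)).fun_mul (H 2 0)) |>.fun_add
    (((H 0 2).fun_mul (H 1 0)).fun_mul (H 2 1)) |>.fun_sub
    (((H 0 2).fun_mul (H 1 1)).fun_mul (H 2 0))).congr_deriv ?_
  simp only [mul_apply, Fin.sum_univ_three, trace_fin_three]
  ring

theorem det_exp_fin_three (A : Matrix (Fin 3) (Fin 3) ℝ) :
    (exp A).det = Real.exp (trace A) := by
  have hconst : ∀ t, HasDerivAt (fun s => Real.exp (s * -trace A) * (exp (s • A)).det) 0 t :=
    fun t => (((hasDerivAt_mul_const _).exp).fun_mul (hasDerivAt_det_exp_smul A t)).congr_deriv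
      (by ring)
  have h10 := is_const_of_deriv_eq_zero (fun t => (hconst t).differentiableAt)
    (fun t => (hconst t).deriv) 1 0
  simp only [one_smul, zero_smul, exp_zero, det_one, one_mul, zero_mul, Real.exp_zero,
    mul_one] at h10
  rw [eq_inv_of_mul_eq_one_right h10, Real.exp_neg, inv_inv]

end Exponential

section Logarithm

variable {n : Type*} [Fintype n] [DecidableEq n]

theorem transpose_mul_diagonal_mulVec_single_dotProduct_self {Q : Matrix n n ℝ}
    (hQ : Q * Qᵀ = 1) (d : n → ℝ) (i : n) :
    ((Qᵀ * diagonal d) *ᵥ Pi.single i 1) ⬝ᵥ ((Qᵀ * diagonal d) *ᵥ Pi.single i 1) = d i ^ 2 := by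
  rw [← mulVec_mulVec, diagonal_mulVec_single, mul_one, transpose_mulVec_dotProduct_self hQ]
  simp [sq]

variable {X Q : Matrix n n ℝ} {d : n → ℝ} {c : ℝ}

theorem log_le_of_exp_eq_transpose_mul_diagonal (hQ : Q * Qᵀ = 1)
    (hX : exp X = Qᵀ * diagonal d) (hc : ∀ u, (X *ᵥ u) ⬝ᵥ u ≤ c * (u ⬝ᵥ u)) {i : n}
    (hd : 0 < d i) : Real.log (d i) ≤ c := by
  have h := exp_mulVec_dotProduct_self_le hc (Pi.single i 1)
  rw [hX, transpose_mul_diagonal_mulVec_single_dotProduct_self hQ] at h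
  have := Real.log_le_log (pow_pos hd 2) (by simpa using h)
  rw [Real.log_pow, Nat.cast_ofNat, Real.log_exp] at this
  linarith

theorem le_log_of_exp_eq_transpose_mul_diagonal (hQ : Q * Qᵀ = 1)
    (hX : exp X = Qᵀ * diagonal d) (hc : ∀ u, c * (u ⬝ᵥ u) ≤ (X *ᵥ u) ⬝ᵥ u) {i : n}
    (hd : 0 < d i) : c ≤ Real.log (d i) := by
  have hc' : ∀ u, (-X *ᵥ u) ⬝ᵥ u ≤ -c * (u ⬝ᵥ u) := fun u => by
    rw [neg_mulVec, neg_dotProduct, neg_mul, neg_le_neg_iff]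
    exact hc u
  -- `exp (-X)` maps the `i`-th column of `exp X`, of length `d i`, back to the unit vector.
  have h := exp_mulVec_dotProduct_self_le hc' (exp X *ᵥ Pi.single i 1)
  rw [mulVec_mulVec, exp_neg_mul_exp, one_mulVec, hX,
    transpose_mul_diagonal_mulVec_single_dotProduct_self hQ] at h
  have := Real.log_le_log one_pos (by simpa using h)
  rw [Real.log_one, Real.log_mul (Real.exp_pos _).ne' (pow_pos hd 2).ne', Real.log_pow,
    Nat.cast_ofNat, Real.log_exp] at this
  linarith

theorem trace_eq_sum_log_of_exp_eq_transpose_mul_diagonal {X Q : Matrix (Fin 3) (Fin 3) ℝ}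
    {d : Fin 3 → ℝ} (hQ : Q.det = 1) (hX : exp X = Qᵀ * diagonal d) (hd : ∀ i, 0 < d i) :
    trace X = ∑ i, Real.log (d i) := by
  rw [← Real.log_prod (fun i _ => (hd i).ne'), ← det_diagonal, ← one_mul (det (diagonal d)),
    ← hQ, ← det_transpose, ← det_mul, ← hX, det_exp_fin_three, Real.log_exp]

end Logarithm

section SymmetricPart

variable {n : Type*} (X : Matrix n n ℝ)

theorem isHermitian_half_smul_add_transpose : ((1 / 2 : ℝ) • (X + Xᵀ)).IsHermitian := by
  rw [IsHermitian, conjTranspose_eq_transpose_of_trivial, transpose_smul, transpose_add,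
    transpose_transpose, add_comm]

variable [Fintype n]

theorem half_smul_add_transpose_mulVec_dotProduct (u : n → ℝ) :
    (((1 / 2 : ℝ) • (X + Xᵀ)) *ᵥ u) ⬝ᵥ u = (X *ᵥ u) ⬝ᵥ u := by
  have hT : (Xᵀ *ᵥ u) ⬝ᵥ u = (X *ᵥ u) ⬝ᵥ u := by
    rw [mulVec_transpose, ← dotProduct_mulVec, dotProduct_comm]
  rw [smul_mulVec, add_mulVec, smul_dotProduct, add_dotProduct, hT, smul_eq_mul]
  ring

theorem trace_half_smul_add_transpose : trace ((1 / 2 : ℝ) • (X + Xᵀ)) = trace X := by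
  rw [trace_smul, trace_add, trace_transpose, smul_eq_mul]
  ring

end SymmetricPart

theorem frobSqR_eq_sum_sq (X : Matrix (Fin 3) (Fin 3) ℝ) : frobSqR X = ∑ i, ∑ j, X i j ^ 2 := by
  simp only [frobSqR, sq_abs]

theorem frobSqR_dev3 (M : Matrix (Fin 3) (Fin 3) ℝ) :
    frobSqR (dev3 M) = frobSqR M - trace M ^ 2 / 3 := by
  simp only [frobSqR_eq_sum_sq, dev3, trace_fin_three, Matrix.sub_apply, Matrix.smul_apply,
    one_apply, Fin.sum_univ_three]
  norm_num [Fin.ext_iff]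
  ring

theorem frobSqR_diagonal (f : Fin 3 → ℝ) : frobSqR (diagonal f) = ∑ i, f i ^ 2 := by
  simp [frobSqR_eq_sum_sq, diagonal_apply, sq]

/-- For `D = diag d` with `dᵢ > 0`, the minimum over `Q ∈ SO(3)` and all real logarithms
`X` of `Qᵀ D` of `‖dev₃ (sym X)‖_F²` equals `‖dev₃ (log D)‖_F²`. -/
theorem min_dev_frobSq_sym_log_SO3 (d : Fin 3 → ℝ) (hdpos : ∀ i, 0 < d i) :
    IsLeast {r : ℝ | ∃ Q ∈ Matrix.orthogonalGroup (Fin 3) ℝ, Q.det = 1 ∧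
        ∃ X : Matrix (Fin 3) (Fin 3) ℝ,
          NormedSpace.exp X = Qᵀ * Matrix.diagonal d ∧
          r = frobSqR (dev3 ((1 / 2 : ℝ) • (X + Xᵀ)))}
      (frobSqR (dev3 (Matrix.diagonal (fun i => Real.log (d i))))) := by
  constructor
  · refine ⟨1, one_mem _, det_one, diagonal fun i => Real.log (d i), ?_, ?_⟩
    · have hexp : exp (fun i => Real.log (d i)) = d := by
        funext i
        rw [Pi.coe_exp, ← Real.exp_eq_exp_ℝ, Real.exp_log (hdpos i)]
      rw [exp_diagonal, hexp, transpose_one, Matrix.one_mul]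
    · rw [diagonal_transpose, ← two_smul ℝ, smul_smul]
      norm_num
  · rintro r ⟨Q, hQ, hdetQ, X, hX, rfl⟩
    have hQ' : Q * Qᵀ = 1 := (mem_orthogonalGroup_iff _ _).1 hQ
    have hS := isHermitian_half_smul_add_transpose X
    have hle : ∀ i, Real.log (d i) ≤ univ.sup' univ_nonempty hS.eigenvalues := fun i =>
      log_le_of_exp_eq_transpose_mul_diagonal hQ' hX (fun u =>
        half_smul_add_transpose_mulVec_dotProduct X u ▸
          hS.mulVec_dotProduct_le (fun j => le_sup' _ (mem_univ j)) u) (hdpos i)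
    have hge : ∀ i, univ.inf' univ_nonempty hS.eigenvalues ≤ Real.log (d i) := fun i =>
      le_log_of_exp_eq_transpose_mul_diagonal hQ' hX (fun u =>
        half_smul_add_transpose_mulVec_dotProduct X u ▸
          hS.le_mulVec_dotProduct (fun j => inf'_le _ (mem_univ j)) u) (hdpos i)
    have htr : ∑ i, Real.log (d i) = ∑ i, hS.eigenvalues i := by
      rw [← trace_eq_sum_log_of_exp_eq_transpose_mul_diagonal hdetQ hX hdpos,
        ← trace_half_smul_add_transpose, hS.trace_eq_sum_eigenvalues]
      simp
    rw [frobSqR_dev3, frobSqR_dev3, frobSqR_diagonal, frobSqR_eq_sum_sq,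
      hS.sum_sq_apply_eq_sum_sq_eigenvalues, trace_diagonal, trace_half_smul_add_transpose,
      trace_eq_sum_log_of_exp_eq_transpose_mul_diagonal hdetQ hX hdpos, htr]
    linarith [sum_sq_le_sum_sq_of_mem_Icc (fun i => ⟨hge i, hle i⟩) htr]
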